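/- For m = 1, 2, 3 let β_m, θ_m ∈ ℝᵖ, let W₁, W₂, W₃ : Ω → (real n×p matrices) be random matrices with E[W_m] = 0 that are mutually independent and independent of (ε₁, ε₂, ε₃), where ε₁, ε₂, ε₃ : Ω → ℝⁿ are square-integrable random vectors with E[ε_m] = 0 and E[ε_m ε_{m'}ᵀ] = Σ_{mm'}. Set y_m = X_m β_m + W_m θ_m + ε_m, y = y₁ + y₂, ŷ = H y, ŷ* = H₁ y₁ + H₂ y₂, ŷ₃ = H₃ y₃, and R := (y₃ − ŷ₃)ᵀ(ŷ* − ŷ). Then E[R] = Tr{(I − H₃)(H₁ − H)Σ₁₃} + Tr{(I − H₃)(H₂ − H)Σ₂₃}. -/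

import Mathlib

/-!
Every hat matrix fixes its own design matrix and `H` fixes both `X₁` and `X₂`, so the mean
parts `X_m β_m` drop out: with `b_m = W_m θ_m + ε_m` and the symmetry of `I − H₃`,
`R = b₃ᵀ (I − H₃)(H₁ − H) b₁ + b₃ᵀ (I − H₃)(H₂ − H) b₂`. The expectation of a bilinear form
`uᵀ M v` is `Tr(M E[v uᵀ])`, and for `m ≠ m'` the cross moment `E[b_m b_{m'}ᵀ]` is `Σ_{mm'}`,
since the three terms involving some `W` vanish by independence and `E[W] = 0`.
-/

open Matrix MeasureTheory ProbabilityTheory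
open scoped BigOperators

/-- The hat matrix `H_A = A (AᵀA)⁻¹ Aᵀ` of a design matrix `A`. -/
noncomputable def hatMat {n : ℕ} {q : Type*} [Fintype q] [DecidableEq q]
    (A : Matrix (Fin n) q ℝ) : Matrix (Fin n) (Fin n) ℝ :=
  A * (Aᵀ * A)⁻¹ * Aᵀ

section HatMatrix

variable {n : ℕ} {q r : Type*} [Fintype q] [DecidableEq q] [Fintype r] [DecidableEq r]

lemma hatMat_transpose (A : Matrix (Fin n) q ℝ) : (hatMat A)ᵀ = hatMat A := by
  simp [hatMat, transpose_mul, transpose_nonsing_inv, Matrix.mul_assoc]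

lemma hatMat_mul_of_isUnit {A : Matrix (Fin n) q ℝ} (h : IsUnit (Aᵀ * A)) : hatMat A * A = A := by
  rw [hatMat, Matrix.mul_assoc, Matrix.mul_assoc,
    nonsing_inv_mul _ ((isUnit_iff_isUnit_det _).mp h), Matrix.mul_one]

lemma hatMat_fromCols_mul_left {A : Matrix (Fin n) q ℝ} {B : Matrix (Fin n) r ℝ}
    (h : IsUnit ((fromCols A B)ᵀ * fromCols A B)) : hatMat (fromCols A B) * A = A :=
  (fromCols_inj (by rw [← mul_fromCols, hatMat_mul_of_isUnit h])).1

lemma hatMat_fromCols_mul_right {A : Matrix (Fin n) q ℝ} {B : Matrix (Fin n) r ℝ}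
    (h : IsUnit ((fromCols A B)ᵀ * fromCols A B)) : hatMat (fromCols A B) * B = B :=
  (fromCols_inj (by rw [← mul_fromCols, hatMat_mul_of_isUnit h])).2

end HatMatrix

section LinearAlgebra

variable {ι κ ν R : Type*} [Fintype κ] [CommRing R]

lemma mulVec_mulVec_add_of_mul_eq_zero [Fintype ν] {M : Matrix ι κ R} {X : Matrix κ ν R}
    (h : M * X = 0) (β : ν → R) (b : κ → R) : M *ᵥ (X *ᵥ β + b) = M *ᵥ b := by
  rw [mulVec_add, mulVec_mulVec, h, zero_mulVec, zero_add]

variable [Fintype ι]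

lemma mulVec_dotProduct_of_transpose_eq {N : Matrix ι ι R} (hN : Nᵀ = N) (a v : ι → R) :
    N *ᵥ a ⬝ᵥ v = a ⬝ᵥ N *ᵥ v := by
  rw [dotProduct_mulVec, ← vecMul_transpose, hN]

lemma dotProduct_mulVec_eq_sum (u : ι → R) (M : Matrix ι κ R) (v : κ → R) :
    u ⬝ᵥ M *ᵥ v = ∑ i, ∑ j, M i j * (v j * u i) := by
  simp only [dotProduct, mulVec, Finset.mul_sum]
  exact Finset.sum_congr rfl fun i _ => Finset.sum_congr rfl fun j _ => by ring

end LinearAlgebra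

section Regression

variable {n : ℕ} {p₁ p₂ p₃ : Type*} [Fintype p₁] [DecidableEq p₁] [Fintype p₂] [DecidableEq p₂]
  [Fintype p₃] [DecidableEq p₃]

lemma residual_dotProduct_fitDifference {X₁ : Matrix (Fin n) p₁ ℝ} {X₂ : Matrix (Fin n) p₂ ℝ}
    {X₃ : Matrix (Fin n) p₃ ℝ} (h₁ : IsUnit (X₁ᵀ * X₁)) (h₂ : IsUnit (X₂ᵀ * X₂))
    (h₃ : IsUnit (X₃ᵀ * X₃)) (h : IsUnit ((fromCols X₁ X₂)ᵀ * fromCols X₁ X₂))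
    (β₁ : p₁ → ℝ) (β₂ : p₂ → ℝ) (β₃ : p₃ → ℝ) (b₁ b₂ b₃ : Fin n → ℝ) :
    (X₃ *ᵥ β₃ + b₃ - hatMat X₃ *ᵥ (X₃ *ᵥ β₃ + b₃)) ⬝ᵥ
        (hatMat X₁ *ᵥ (X₁ *ᵥ β₁ + b₁) + hatMat X₂ *ᵥ (X₂ *ᵥ β₂ + b₂)
          - hatMat (fromCols X₁ X₂) *ᵥ (X₁ *ᵥ β₁ + b₁ + (X₂ *ᵥ β₂ + b₂)))
      = b₃ ⬝ᵥ ((1 - hatMat X₃) * (hatMat X₁ - hatMat (fromCols X₁ X₂))) *ᵥ b₁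
        + b₃ ⬝ᵥ ((1 - hatMat X₃) * (hatMat X₂ - hatMat (fromCols X₁ X₂))) *ᵥ b₂ := by
  set H := hatMat (fromCols X₁ X₂)
  have hX₁ : (hatMat X₁ - H) * X₁ = 0 := by
    rw [Matrix.sub_mul, hatMat_mul_of_isUnit h₁, hatMat_fromCols_mul_left h, sub_self]
  have hX₂ : (hatMat X₂ - H) * X₂ = 0 := by
    rw [Matrix.sub_mul, hatMat_mul_of_isUnit h₂, hatMat_fromCols_mul_right h, sub_self]
  have hX₃ : (1 - hatMat X₃) * X₃ = 0 := by
    rw [Matrix.sub_mul, Matrix.one_mul, hatMat_mul_of_isUnit h₃, sub_self]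
  have hsymm : (1 - hatMat X₃)ᵀ = 1 - hatMat X₃ := by
    rw [transpose_sub, transpose_one, hatMat_transpose]
  calc _ = (1 - hatMat X₃) *ᵥ (X₃ *ᵥ β₃ + b₃) ⬝ᵥ
        ((hatMat X₁ - H) *ᵥ (X₁ *ᵥ β₁ + b₁) + (hatMat X₂ - H) *ᵥ (X₂ *ᵥ β₂ + b₂)) := by
        rw [sub_mulVec, one_mulVec, sub_mulVec, sub_mulVec, mulVec_add H]
        abel_nf
    _ = _ := by
        rw [mulVec_mulVec_add_of_mul_eq_zero hX₃, mulVec_mulVec_add_of_mul_eq_zero hX₁,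
          mulVec_mulVec_add_of_mul_eq_zero hX₂, mulVec_dotProduct_of_transpose_eq hsymm,
          mulVec_add, dotProduct_add, mulVec_mulVec, mulVec_mulVec]

end Regression

section Moments

variable {Ω : Type*} [MeasurableSpace Ω] {μ : Measure Ω}

lemma integrable_dotProduct_mulVec {ι κ : Type*} [Fintype ι] [Fintype κ] (M : Matrix ι κ ℝ)
    {u : Ω → ι → ℝ} {v : Ω → κ → ℝ} (hint : ∀ i j, Integrable (fun ω => v ω j * u ω i) μ) :
    Integrable (fun ω => u ω ⬝ᵥ M *ᵥ v ω) μ := by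
  simp only [dotProduct_mulVec_eq_sum]
  exact integrable_finsetSum _ fun i _ => integrable_finsetSum _ fun j _ => (hint i j).const_mul _

lemma integral_dotProduct_mulVec {ι κ : Type*} [Fintype ι] [Fintype κ] (M : Matrix ι κ ℝ)
    {u : Ω → ι → ℝ} {v : Ω → κ → ℝ} {C : Matrix κ ι ℝ}
    (hint : ∀ i j, Integrable (fun ω => v ω j * u ω i) μ)
    (hC : ∀ i j, ∫ ω, v ω j * u ω i ∂μ = C j i) :
    ∫ ω, u ω ⬝ᵥ M *ᵥ v ω ∂μ = trace (M * C) := by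
  simp only [dotProduct_mulVec_eq_sum, trace, diag_apply, mul_apply]
  refine (integral_finsetSum _ fun i _ =>
    integrable_finsetSum _ fun j _ => (hint i j).const_mul _).trans
    (Finset.sum_congr rfl fun i _ => ?_)
  refine (integral_finsetSum _ fun j _ => (hint i j).const_mul _).trans
    (Finset.sum_congr rfl fun j _ => ?_)
  rw [integral_const_mul, hC]

lemma integral_add_mul_add_of_indepFun {a a' e e' : Ω → ℝ} (ha : MemLp a 2 μ)
    (ha' : MemLp a' 2 μ) (he : MemLp e 2 μ) (he' : MemLp e' 2 μ) (ha₀ : ∫ ω, a ω ∂μ = 0)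
    (ha'₀ : ∫ ω, a' ω ∂μ = 0) (haa' : IndepFun a a' μ) (hae' : IndepFun a e' μ)
    (hea' : IndepFun e a' μ) :
    ∫ ω, (a ω + e ω) * (a' ω + e' ω) ∂μ = ∫ ω, e ω * e' ω ∂μ := by
  have hexpand : ∀ ω, (a ω + e ω) * (a' ω + e' ω)
      = a ω * a' ω + a ω * e' ω + (e ω * a' ω + e ω * e' ω) := fun ω => by ring
  have hint : ∀ {f g : Ω → ℝ}, MemLp f 2 μ → MemLp g 2 μ → Integrable (fun ω => f ω * g ω) μ :=
    fun hf hg => hf.integrable_mul hg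
  simp_rw [hexpand]
  rw [integral_add ((hint ha ha').fun_add (hint ha he')) ((hint he ha').fun_add (hint he he')),
    integral_add (hint ha ha') (hint ha he'), integral_add (hint he ha') (hint he he'),
    haa'.integral_fun_mul_eq_mul_integral ha.1 ha'.1,
    hae'.integral_fun_mul_eq_mul_integral ha.1 he'.1,
    hea'.integral_fun_mul_eq_mul_integral he.1 ha'.1]
  simp [ha₀, ha'₀]

end Moments

section RandomMatrix

variable {Ω : Type*} [MeasurableSpace Ω] {μ : Measure Ω} {r c : Type*} [Fintype c]

lemma memLp_mulVec_apply {p : ENNReal} {W : Ω → r → c → ℝ}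
    (hW : ∀ i k, MemLp (fun ω => W ω i k) p μ) (θ : c → ℝ) (i : r) :
    MemLp (fun ω => (of (W ω) *ᵥ θ) i) p μ :=
  memLp_finsetSum _ fun k _ => (hW i k).mul_const (θ k)

lemma integral_mulVec_apply {W : Ω → r → c → ℝ} (hW : ∀ i k, Integrable (fun ω => W ω i k) μ)
    (θ : c → ℝ) (i : r) :
    ∫ ω, (of (W ω) *ᵥ θ) i ∂μ = ∑ k, (∫ ω, W ω i k ∂μ) * θ k := by
  simp only [mulVec, dotProduct, of_apply]
  rw [integral_finsetSum _ fun k _ => (hW i k).mul_const _]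
  simp_rw [integral_mul_const]

lemma measurable_mulVec_apply (θ : c → ℝ) (i : r) :
    Measurable fun w : r → c → ℝ => (of w *ᵥ θ) i := by
  simp only [mulVec, dotProduct, of_apply]
  fun_prop

lemma integral_noise_mul_noise [IsFiniteMeasure μ] {ι : Type*} {W : ι → Ω → r → c → ℝ}
    {ε : ι → Ω → r → ℝ} (θ : ι → c → ℝ) (hWL2 : ∀ m i k, MemLp (fun ω => W m ω i k) 2 μ)
    (hWmean : ∀ m i k, ∫ ω, W m ω i k ∂μ = 0) (hWindep : iIndepFun W μ)
    (hWε : IndepFun (fun ω m => W m ω) (fun ω m => ε m ω) μ)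
    (hεL2 : ∀ m i, MemLp (fun ω => ε m ω i) 2 μ) {m m' : ι} (hm : m ≠ m') (i j : r) :
    ∫ ω, (of (W m ω) *ᵥ θ m + ε m ω) i * (of (W m' ω) *ᵥ θ m' + ε m' ω) j ∂μ
      = ∫ ω, ε m ω i * ε m' ω j ∂μ := by
  have hmean : ∀ m i, ∫ ω, (of (W m ω) *ᵥ θ m) i ∂μ = 0 := fun m i => by
    simp [integral_mulVec_apply (fun i k => (hWL2 m i k).integrable one_le_two), hWmean]
  have hmeas : ∀ m i, Measurable fun w : ι → r → c → ℝ => (of (w m) *ᵥ θ m) i :=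
    fun m i => (measurable_mulVec_apply (θ m) i).comp (measurable_pi_apply m)
  exact integral_add_mul_add_of_indepFun (memLp_mulVec_apply (hWL2 m) _ i)
    (memLp_mulVec_apply (hWL2 m') _ j) (hεL2 m i) (hεL2 m' j) (hmean m i) (hmean m' j)
    ((hWindep.indepFun hm).comp (measurable_mulVec_apply _ i) (measurable_mulVec_apply _ j))
    (hWε.comp (hmeas m i) (by fun_prop : Measurable fun e : ι → r → ℝ => e m' j))
    (hWε.symm.comp (by fun_prop : Measurable fun e : ι → r → ℝ => e m i) (hmeas m' j))

end RandomMatrix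

theorem expectation_R_random_W_general {n p : ℕ}
    {Ω : Type*} [MeasurableSpace Ω] (P : Measure Ω) [IsProbabilityMeasure P]
    (X : Fin 3 → Matrix (Fin n) (Fin p) ℝ)
    (hXm : ∀ m, IsUnit ((X m)ᵀ * X m))
    (hX : IsUnit ((fromCols (X 0) (X 1))ᵀ * fromCols (X 0) (X 1)))
    (β θ : Fin 3 → Fin p → ℝ)
    (W : Fin 3 → Ω → Fin n → Fin p → ℝ)
    (ε : Fin 3 → Ω → Fin n → ℝ)
    (Sig : Fin 3 → Fin 3 → Matrix (Fin n) (Fin n) ℝ)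
    (hWL2 : ∀ m i j, MemLp (fun ω => W m ω i j) 2 P)
    (hWmean : ∀ m i j, ∫ ω, W m ω i j ∂P = 0)
    (hWindep : iIndepFun W P)
    (hWε : IndepFun (fun ω => fun m => W m ω) (fun ω => fun m => ε m ω) P)
    (hεL2 : ∀ m i, MemLp (fun ω => ε m ω i) 2 P)
    (hcov : ∀ m m' i j, ∫ ω, ε m ω i * ε m' ω j ∂P = Sig m m' i j) :
    let y : Fin 3 → Ω → Fin n → ℝ :=
      fun m ω => (X m).mulVec (β m) + (Matrix.of (W m ω)).mulVec (θ m) + ε m ω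
    let H := hatMat (fromCols (X 0) (X 1))
    let H₁ := hatMat (X 0)
    let H₂ := hatMat (X 1)
    let H₃ := hatMat (X 2)
    (∫ ω, (y 2 ω - H₃.mulVec (y 2 ω)) ⬝ᵥ
        ((H₁.mulVec (y 0 ω) + H₂.mulVec (y 1 ω)) - H.mulVec (y 0 ω + y 1 ω)) ∂P)
      = Matrix.trace ((1 - H₃) * (H₁ - H) * Sig 0 2)
        + Matrix.trace ((1 - H₃) * (H₂ - H) * Sig 1 2) := by
  intro y H H₁ H₂ H₃
  set b : Fin 3 → Ω → Fin n → ℝ := fun m ω => of (W m ω) *ᵥ θ m + ε m ω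
  have hy : ∀ m ω, y m ω = X m *ᵥ β m + b m ω := fun m ω => add_assoc _ _ _
  have hR : ∀ ω, (y 2 ω - H₃ *ᵥ y 2 ω) ⬝ᵥ (H₁ *ᵥ y 0 ω + H₂ *ᵥ y 1 ω - H *ᵥ (y 0 ω + y 1 ω))
      = b 2 ω ⬝ᵥ ((1 - H₃) * (H₁ - H)) *ᵥ b 0 ω + b 2 ω ⬝ᵥ ((1 - H₃) * (H₂ - H)) *ᵥ b 1 ω := by
    intro ω
    rw [hy, hy, hy]
    exact residual_dotProduct_fitDifference (hXm 0) (hXm 1) (hXm 2) hX _ _ _ _ _ _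
  have hbL2 : ∀ m i, MemLp (fun ω => b m ω i) 2 P := fun m i =>
    (memLp_mulVec_apply (hWL2 m) (θ m) i).add (hεL2 m i)
  have hint : ∀ m m' i j, Integrable (fun ω => b m ω i * b m' ω j) P := fun m m' i j =>
    (hbL2 m i).integrable_mul (hbL2 m' j)
  have hmoment : ∀ m, m ≠ 2 → ∀ i j, ∫ ω, b m ω j * b 2 ω i ∂P = Sig m 2 j i := fun m hm i j =>
    (integral_noise_mul_noise θ hWL2 hWmean hWindep hWε hεL2 hm j i).trans (hcov m 2 j i)
  rw [integral_congr_ae (.of_forall hR),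
    integral_add (integrable_dotProduct_mulVec _ fun i j => hint 0 2 j i)
      (integrable_dotProduct_mulVec _ fun i j => hint 1 2 j i),
    integral_dotProduct_mulVec _ (fun i j => hint 0 2 j i) (hmoment 0 (by decide)),
    integral_dotProduct_mulVec _ (fun i j => hint 1 2 j i) (hmoment 1 (by decide))]

/-- **Lemma 2** (unconditional formula): with mean-zero, mutually independent random `W_m`
independent of the errors, `E[R] = Tr{(I−H₃)(H₁−H)Σ₁₃} + Tr{(I−H₃)(H₂−H)Σ₂₃}`. -/
theorem expectation_R_random_W {n p : ℕ}
    {Ω : Type*} [MeasurableSpace Ω] (P : Measure Ω) [IsProbabilityMeasure P]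
    (X : Fin 3 → Matrix (Fin n) (Fin p) ℝ)
    (hXm : ∀ m, IsUnit ((X m)ᵀ * X m))
    (hX : IsUnit ((fromCols (X 0) (X 1))ᵀ * fromCols (X 0) (X 1)))
    (β θ : Fin 3 → Fin p → ℝ)
    (W : Fin 3 → Ω → Fin n → Fin p → ℝ)
    (ε : Fin 3 → Ω → Fin n → ℝ)
    (Sig : Fin 3 → Fin 3 → Matrix (Fin n) (Fin n) ℝ)
    (hWL2 : ∀ m i j, MemLp (fun ω => W m ω i j) 2 P)
    (hWmean : ∀ m i j, ∫ ω, W m ω i j ∂P = 0)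
    (hWindep : iIndepFun W P)
    (hWε : IndepFun (fun ω => fun m => W m ω) (fun ω => fun m => ε m ω) P)
    (hεL2 : ∀ m i, MemLp (fun ω => ε m ω i) 2 P)
    (hεmean : ∀ m i, ∫ ω, ε m ω i ∂P = 0)
    (hcov : ∀ m m' i j, ∫ ω, ε m ω i * ε m' ω j ∂P = Sig m m' i j) :
    let y : Fin 3 → Ω → Fin n → ℝ :=
      fun m ω => (X m).mulVec (β m) + (Matrix.of (W m ω)).mulVec (θ m) + ε m ω
    let H := hatMat (fromCols (X 0) (X 1))
    let H₁ := hatMat (X 0)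
    let H₂ := hatMat (X 1)
    let H₃ := hatMat (X 2)
    (∫ ω, (y 2 ω - H₃.mulVec (y 2 ω)) ⬝ᵥ
        ((H₁.mulVec (y 0 ω) + H₂.mulVec (y 1 ω)) - H.mulVec (y 0 ω + y 1 ω)) ∂P)
      = Matrix.trace ((1 - H₃) * (H₁ - H) * Sig 0 2)
        + Matrix.trace ((1 - H₃) * (H₂ - H) * Sig 1 2) :=
  expectation_R_random_W_general P X hXm hX β θ W ε Sig hWL2 hWmean hWindep hWε hεL2 hcov
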